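/- arXiv:2006.16053 — 16 statements merged into one kernel-verified Lean document; each statement's English description precedes it below -/
import Mathlib

section
/- Let (P,≤,',0,1) be a bounded distributive poset with an antitone involution and let a,b ∈ P with a ≤ b and L(b,a') = {0}. Then U(a,a') = U(b,b') = {1}. -/
/-- `f` is an antitone involution on the poset `P`. -/
def AntitoneInvolution {P : Type*} [PartialOrder P] (f : P → P) : Prop :=
  (∀ x, f (f x) = x) ∧ ∀ x y : P, x ≤ y → f y ≤ f x

/-- A poset is distributive if `L(U(x,y),z) = L(U(L(x,z) ∪ L(y,z)))` for all `x,y,z`. -/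
def DistributivePoset (P : Type*) [PartialOrder P] : Prop :=
  ∀ x y z : P,
    lowerBounds (upperBounds {x, y} ∪ {z}) =
      lowerBounds (upperBounds (lowerBounds {x, z} ∪ lowerBounds {y, z}))

theorem stmt_1 {P : Type*} [PartialOrder P] [BoundedOrder P] (f : P → P)
    (hf : AntitoneInvolution f) (hdist : DistributivePoset P)
    (a b : P) (hab : a ≤ b) (h : lowerBounds {b, f a} = {⊥}) :
    upperBounds {a, f a} = ({⊤} : Set P) ∧ upperBounds {b, f b} = ({⊤} : Set P) := by
  obtain ⟨hinv, hanti⟩ := hf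
  have hfbot : f ⊥ = ⊤ := by
    apply le_antisymm le_top
    calc (⊤ : P) = f (f ⊤) := (hinv ⊤).symm
    _ ≤ f ⊥ := hanti ⊥ (f ⊤) bot_le
  have key : ∀ t : P, t ≤ b → t ≤ f a → t = ⊥ := by
    intro t h1 h2
    have : t ∈ lowerBounds {b, f a} := by
      intro x hx
      rcases hx with rfl | hx
      · exact h1
      · simp only [Set.mem_singleton_iff] at hx; subst hx; exact h2
    rw [h] at this
    exact this
  constructor
  · ext t
    simp only [Set.mem_singleton_iff]
    constructor
    · intro ht
      have ha : a ≤ t := ht (by simp)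
      have ha' : f a ≤ t := ht (by simp)
      have h1 : f t ≤ b := le_trans (by simpa [hinv] using hanti (f a) t ha') hab
      have h2 : f t ≤ f a := hanti a t ha
      have := key (f t) h1 h2
      calc t = f (f t) := (hinv t).symm
      _ = f ⊥ := by rw [this]
      _ = ⊤ := hfbot
    · rintro rfl
      intro x _; exact le_top
  · ext t
    simp only [Set.mem_singleton_iff]
    constructor
    · intro ht
      have hb : b ≤ t := ht (by simp)
      have hb' : f b ≤ t := ht (by simp)
      have h1 : f t ≤ b := by simpa [hinv] using hanti (f b) t hb'
      have h2 : f t ≤ f a := le_trans (hanti b t hb) (hanti a b hab)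
      have := key (f t) h1 h2
      calc t = f (f t) := (hinv t).symm
      _ = f ⊥ := by rw [this]
      _ = ⊤ := hfbot
    · rintro rfl
      intro x _; exact le_top
end

section
/- Let (P,≤,',0,1) be a bounded poset with an antitone involution having at least three elements. Then P is consistent if and only if P has exactly one atom a (a minimal element of P∖{0}), P = [a,a'] ∪ {0,1}, and ' restricted to the interval [a,a'] is a complementation on ([a,a'],≤), i.e. for every x ∈ [a,a'] the set of common lower bounds of x and x' within [a,a'] equals {a} and the set of common upper bounds of x and x' within [a,a'] equals {a'}. -/
/-- Condition (8): `L(x,x') = L(y,y')` for all `x,y ∉ {0,1}`. -/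
def Cond8 {P : Type*} [PartialOrder P] [BoundedOrder P] (f : P → P) : Prop :=
  ∀ x y : P, x ≠ ⊥ → x ≠ ⊤ → y ≠ ⊥ → y ≠ ⊤ →
    lowerBounds {x, f x} = lowerBounds {y, f y}

/-- Condition (9): `L(x,y) ≠ {0}` for all `x,y ≠ 0`. -/
def Cond9 (P : Type*) [PartialOrder P] [BoundedOrder P] : Prop :=
  ∀ x y : P, x ≠ ⊥ → y ≠ ⊥ → lowerBounds {x, y} ≠ ({⊥} : Set P)

/-- `a` is an atom of `P`, i.e. a minimal element of `P \ {⊥}`. -/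
def IsAtomOf {P : Type*} [PartialOrder P] [BoundedOrder P] (a : P) : Prop :=
  a ≠ ⊥ ∧ ∀ x : P, x ≠ ⊥ → x ≤ a → x = a

theorem stmt_2 {P : Type*} [PartialOrder P] [BoundedOrder P] (f : P → P)
    (hf : AntitoneInvolution f)
    (hcard : ∃ a b c : P, a ≠ b ∧ a ≠ c ∧ b ≠ c) :
    (Cond8 f ∧ Cond9 P) ↔
      ∃ a : P, IsAtomOf a ∧ (∀ b : P, IsAtomOf b → b = a) ∧
        (∀ x : P, (a ≤ x ∧ x ≤ f a) ∨ x = ⊥ ∨ x = ⊤) ∧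
        (∀ x : P, a ≤ x → x ≤ f a →
          ({z : P | (a ≤ z ∧ z ≤ f a) ∧ z ≤ x ∧ z ≤ f x} = {a} ∧
           {z : P | (a ≤ z ∧ z ≤ f a) ∧ x ≤ z ∧ f x ≤ z} = {f a})) := by
  obtain ⟨hinv, hant⟩ := hf
  have ftop : f ⊤ = ⊥ := by
    have h1 : f ⊤ ≤ f (f ⊥) := hant _ _ le_top
    rw [hinv] at h1
    exact le_bot_iff.mp h1
  have fbot : f ⊥ = ⊤ := by rw [← ftop, hinv]
  have fxtop : ∀ x : P, x ≠ ⊥ → f x ≠ ⊤ := by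
    intro x hx h
    exact hx (by rw [← hinv x, h, ftop])
  have fxbot : ∀ x : P, x ≠ ⊤ → f x ≠ ⊥ := by
    intro x hx h
    exact hx (by rw [← hinv x, h, fbot])
  have memL : ∀ x y z : P, z ≤ x → z ≤ y → z ∈ lowerBounds ({x, y} : Set P) := by
    intro x y z h1 h2 w hw
    simp only [Set.mem_insert_iff, Set.mem_singleton_iff] at hw
    rcases hw with rfl | rfl
    · exact h1
    · exact h2
  have memL1 : ∀ x y z : P, z ∈ lowerBounds ({x, y} : Set P) → z ≤ x :=
    fun x y z h => h (Set.mem_insert _ _)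
  have memL2 : ∀ x y z : P, z ∈ lowerBounds ({x, y} : Set P) → z ≤ y :=
    fun x y z h => h (Set.mem_insert_of_mem _ rfl)
  -- get an element c which is neither ⊥ nor ⊤
  obtain ⟨c, hc0, hc1⟩ : ∃ c : P, c ≠ ⊥ ∧ c ≠ ⊤ := by
    by_contra h
    push_neg at h
    have h' : ∀ c : P, c = ⊥ ∨ c = ⊤ := by
      intro c
      by_cases hc : c = ⊥
      · exact Or.inl hc
      · exact Or.inr (h c hc)
    obtain ⟨x, y, z, hxy, hxz, hyz⟩ := hcard
    rcases h' x with rfl | rfl <;> rcases h' y with rfl | rfl <;>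
        rcases h' z with rfl | rfl <;>
      first
        | exact hxy rfl
        | exact hxz rfl
        | exact hyz rfl
  constructor
  · rintro ⟨h8, h9⟩
    -- find a nonzero element a of L(c, f c)
    obtain ⟨a, haA, ha0⟩ : ∃ a : P, a ∈ lowerBounds ({c, f c} : Set P) ∧ a ≠ ⊥ := by
      by_contra h
      push_neg at h
      apply h9 c (f c) hc0 (fxbot c hc1)
      ext z
      simp only [Set.mem_singleton_iff]
      constructor
      · intro hz; exact h z hz
      · rintro rfl; exact memL _ _ _ bot_le bot_le
    have ha1 : a ≠ ⊤ := by
      rintro rfl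
      exact hc0 (by rw [← hinv c, top_le_iff.mp (memL2 _ _ _ haA), ftop])
    have key : ∀ x : P, x ≠ ⊥ → x ≠ ⊤ → a ≤ x ∧ a ≤ f x := by
      intro x hx0 hx1
      have h := (h8 x c hx0 hx1 hc0 hc1).symm ▸ haA
      exact ⟨memL1 _ _ _ h, memL2 _ _ _ h⟩
    have hafa : a ≤ f a := (key a ha0 ha1).2
    refine ⟨a, ⟨ha0, ?_⟩, ?_, ?_, ?_⟩
    · -- a is an atom
      intro y hy0 hya
      rcases eq_or_ne y ⊤ with rfl | hy1
      · exact (top_le_iff.mp hya).symm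
      · exact le_antisymm hya (key y hy0 hy1).1
    · -- uniqueness of the atom
      rintro b ⟨hb0, hbmin⟩
      have hb1 : b ≠ ⊤ := by
        rintro rfl
        exact hc1 (hbmin c hc0 le_top)
      exact (hbmin a ha0 (key b hb0 hb1).1).symm
    · -- P = [a, f a] ∪ {⊥, ⊤}
      intro x
      rcases eq_or_ne x ⊥ with rfl | hx0
      · exact Or.inr (Or.inl rfl)
      rcases eq_or_ne x ⊤ with rfl | hx1
      · exact Or.inr (Or.inr rfl)
      refine Or.inl ⟨(key x hx0 hx1).1, ?_⟩
      have := hant a (f x) (key x hx0 hx1).2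
      rwa [hinv] at this
    · -- complementation on [a, f a]
      intro x hax hxfa
      have hx0 : x ≠ ⊥ := by rintro rfl; exact ha0 (le_bot_iff.mp hax)
      have hx1 : x ≠ ⊤ := by
        rintro rfl
        exact ha0 (by rw [← hinv a, top_le_iff.mp hxfa, ftop])
      have hfirst : {z : P | (a ≤ z ∧ z ≤ f a) ∧ z ≤ x ∧ z ≤ f x} = {a} := by
        ext z
        simp only [Set.mem_setOf_eq, Set.mem_singleton_iff]
        constructor
        · rintro ⟨⟨haz, hzfa⟩, hzx, hzfx⟩
          have h := (h8 x a hx0 hx1 ha0 ha1) ▸ memL x (f x) z hzx hzfx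
          exact le_antisymm (memL1 _ _ _ h) haz
        · rintro rfl
          exact ⟨⟨le_refl _, hafa⟩, hax, (key x hx0 hx1).2⟩
      refine ⟨hfirst, ?_⟩
      ext z
      simp only [Set.mem_setOf_eq, Set.mem_singleton_iff]
      constructor
      · rintro ⟨⟨haz, hzfa⟩, hxz, hfxz⟩
        have h1 : a ≤ f z := by have := hant z (f a) hzfa; rwa [hinv] at this
        have h2 : f z ≤ f a := hant a z haz
        have h3 : f z ≤ x := by have := hant (f x) z hfxz; rwa [hinv] at this
        have h4 : f z ≤ f x := hant x z hxz
        have : f z ∈ {w : P | (a ≤ w ∧ w ≤ f a) ∧ w ≤ x ∧ w ≤ f x} :=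
          ⟨⟨h1, h2⟩, h3, h4⟩
        rw [hfirst, Set.mem_singleton_iff] at this
        rw [← hinv z, this]
      · rintro rfl
        exact ⟨⟨hafa, le_refl _⟩, hxfa, hant a x hax⟩
  · rintro ⟨a, ⟨ha0, hamin⟩, -, hP, hcomp⟩
    have hc : a ≤ c ∧ c ≤ f a := by
      rcases hP c with h | rfl | rfl
      · exact h
      · exact absurd rfl hc0
      · exact absurd rfl hc1
    have hafa : a ≤ f a := hc.1.trans hc.2
    have ha1 : a ≠ ⊤ := by rintro rfl; exact hc1 (top_le_iff.mp hc.1)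
    have hL : ∀ x : P, x ≠ ⊥ → x ≠ ⊤ →
        lowerBounds ({x, f x} : Set P) = {⊥, a} := by
      intro x hx0 hx1
      have hx : a ≤ x ∧ x ≤ f a := by
        rcases hP x with h | rfl | rfl
        · exact h
        · exact absurd rfl hx0
        · exact absurd rfl hx1
      have hafx : a ≤ f x := by have := hant x (f a) hx.2; rwa [hinv] at this
      ext z
      simp only [Set.mem_insert_iff, Set.mem_singleton_iff]
      constructor
      · intro hz
        have hzx := memL1 _ _ _ hz
        have hzfx := memL2 _ _ _ hz
        rcases hP z with h | rfl | rfl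
        · right
          have := (hcomp x hx.1 hx.2).1
          have hm : z ∈ {w : P | (a ≤ w ∧ w ≤ f a) ∧ w ≤ x ∧ w ≤ f x} :=
            ⟨h, hzx, hzfx⟩
          rwa [this, Set.mem_singleton_iff] at hm
        · exact Or.inl rfl
        · exact absurd (top_le_iff.mp hzx) hx1
      · rintro (rfl | rfl)
        · exact memL _ _ _ bot_le bot_le
        · exact memL _ _ _ hx.1 hafx
    refine ⟨?_, ?_⟩
    · intro x y hx0 hx1 hy0 hy1
      rw [hL x hx0 hx1, hL y hy0 hy1]
    · intro x y hx0 hy0 heq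
      rcases eq_or_ne x ⊤ with rfl | hx1
      · have : y ∈ lowerBounds ({⊤, y} : Set P) := memL _ _ _ le_top (le_refl y)
        rw [heq, Set.mem_singleton_iff] at this
        exact hy0 this
      rcases eq_or_ne y ⊤ with rfl | hy1
      · have : x ∈ lowerBounds ({x, ⊤} : Set P) := memL _ _ _ (le_refl x) le_top
        rw [heq, Set.mem_singleton_iff] at this
        exact hx0 this
      have hx : a ≤ x := by
        rcases hP x with h | rfl | rfl
        · exact h.1
        · exact absurd rfl hx0
        · exact absurd rfl hx1
      have hy : a ≤ y := by
        rcases hP y with h | rfl | rfl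
        · exact h.1
        · exact absurd rfl hy0
        · exact absurd rfl hy1
      have : a ∈ lowerBounds ({x, y} : Set P) := memL _ _ _ hx hy
      rw [heq, Set.mem_singleton_iff] at this
      exact ha0 this
end

section
/- Let (P,≤) be a downward directed poset with a unary operation ' satisfying x'' = x, and let ⊓ be an assigned meet-directoid operation on P (i.e. ⊓ is commutative, x⊓y ∈ L(x,y) for all x,y, and x ≤ y if and only if x⊓y = x). Then ' is antitone (x ≤ y implies y' ≤ x') if and only if (x⊓y)'⊓y' = y' holds for all x,y ∈ P. -/
/-- `m` is a meet-directoid operation assigned to the poset `P`: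
it is commutative, `x ⊓ y` is a lower bound of `x` and `y`, and
`x ≤ y` if and only if `x ⊓ y = x`. -/
def AssignedDirectoid {P : Type*} [PartialOrder P] (m : P → P → P) : Prop :=
  (∀ x y : P, m x y = m y x) ∧
  (∀ x y : P, m x y ∈ lowerBounds {x, y}) ∧
  (∀ x y : P, x ≤ y ↔ m x y = x)

theorem stmt_3 {P : Type*} [PartialOrder P]
    (hdir : ∀ x y : P, (lowerBounds {x, y}).Nonempty)
    (f : P → P) (hinv : ∀ x, f (f x) = x)
    (m : P → P → P) (hm : AssignedDirectoid m) :
    (∀ x y : P, x ≤ y → f y ≤ f x) ↔ (∀ x y : P, m (f (m x y)) (f y) = f y) := by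
  obtain ⟨hcomm, hlb, hiff⟩ := hm
  constructor
  · intro hant x y
    have h1 : m x y ≤ y := hlb x y (by simp)
    have h2 : f y ≤ f (m x y) := hant _ _ h1
    have := (hiff _ _).mp h2
    rw [hcomm] at this
    exact this
  · intro h x y hxy
    have hx : m x y = x := (hiff _ _).mp hxy
    have := h x y
    rw [hx] at this
    exact (hiff _ _).mpr (by rw [hcomm]; exact this)
end

section
/- Let (P,≤) be a downward directed poset, a,b,c ∈ P, and ⊓ an assigned meet-directoid operation on P (i.e. ⊓ is commutative, x⊓y ∈ L(x,y) for all x,y, and x ≤ y if and only if x⊓y = x). Then c ∈ L(a,b) if and only if c = (c⊓a)⊓(c⊓b). -/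
theorem stmt_4 {P : Type*} [PartialOrder P]
    (hdir : ∀ x y : P, (lowerBounds {x, y}).Nonempty)
    (m : P → P → P) (hm : AssignedDirectoid m) (a b c : P) :
    c ∈ lowerBounds {a, b} ↔ c = m (m c a) (m c b) := by
  obtain ⟨hcomm, hlb, hiff⟩ := hm
  have hle1 : ∀ x y : P, m x y ≤ x := fun x y => (hlb x y) (Set.mem_insert _ _)
  have hle2 : ∀ x y : P, m x y ≤ y := fun x y =>
    (hlb x y) (Set.mem_insert_of_mem _ rfl)
  constructor
  · intro hc
    have hca : m c a = c := (hiff c a).mp (hc (Set.mem_insert _ _))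
    have hcb : m c b = c := (hiff c b).mp (hc (Set.mem_insert_of_mem _ rfl))
    rw [hca, hcb, (hiff c c).mp le_rfl]
  · intro hc
    intro x hx
    rcases hx with rfl | hx
    · calc c = m (m c x) (m c b) := hc
        _ ≤ m c x := hle1 _ _
        _ ≤ x := hle2 _ _
    · rw [Set.mem_singleton_iff] at hx
      subst hx
      calc c = m (m c a) (m c x) := hc
        _ ≤ m c x := hle2 _ _
        _ ≤ x := hle2 _ _
end

section
/- Let (P,≤,',0,1) be a bounded poset with a unary operation and ⊓ an assigned meet-directoid operation on P (i.e. ⊓ is commutative, x⊓y ∈ L(x,y) for all x,y, and x ≤ y if and only if x⊓y = x). Then the implication (10): 'x,y ∉ {0,1} and z = (z⊓x)⊓(z⊓x') imply z = (z⊓y)⊓(z⊓y')' holds for all x,y,z ∈ P if and only if L(x,x') = L(y,y') for all x,y ∈ P∖{0,1}. -/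
theorem stmt_5 {P : Type*} [PartialOrder P] [BoundedOrder P] (f : P → P)
    (m : P → P → P) (hm : AssignedDirectoid m) :
    (∀ x y z : P, x ≠ ⊥ → x ≠ ⊤ → y ≠ ⊥ → y ≠ ⊤ →
        z = m (m z x) (m z (f x)) → z = m (m z y) (m z (f y))) ↔
      (∀ x y : P, x ≠ ⊥ → x ≠ ⊤ → y ≠ ⊥ → y ≠ ⊤ →
        lowerBounds {x, f x} = lowerBounds {y, f y}) := by
  obtain ⟨hc, hlb, hle⟩ := hm
  have hmem : ∀ z x : P, z ∈ lowerBounds ({x, f x} : Set P) ↔ z ≤ x ∧ z ≤ f x := by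
    intro z x
    constructor
    · intro h
      exact ⟨h (by simp), h (by simp)⟩
    · rintro ⟨h1, h2⟩ w hw
      rcases hw with hw | hw <;> simp_all
  have key : ∀ z x : P, z = m (m z x) (m z (f x)) ↔ z ≤ x ∧ z ≤ f x := by
    intro z x
    constructor
    · intro h
      have h1 : m z x ≤ x := hlb z x (by simp)
      have h2 : m z (f x) ≤ f x := hlb z (f x) (by simp)
      have h3 : z ≤ m z x := by
        have := hlb (m z x) (m z (f x)) (Set.mem_insert _ _)
        rw [← h] at this; exact this
      have h4 : z ≤ m z (f x) := by
        have := hlb (m z x) (m z (f x)) (Set.mem_insert_iff.mpr (Or.inr rfl))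
        rw [← h] at this; exact this
      exact ⟨le_trans h3 h1, le_trans h4 h2⟩
    · rintro ⟨h1, h2⟩
      have e1 : m z x = z := (hle z x).mp h1
      have e2 : m z (f x) = z := (hle z (f x)).mp h2
      rw [e1, e2, (hle z z).mp le_rfl]
  constructor
  · intro H x y hx1 hx2 hy1 hy2
    ext z
    rw [hmem, hmem, ← key, ← key]
    exact ⟨H x y z hx1 hx2 hy1 hy2, H y x z hy1 hy2 hx1 hx2⟩
  · intro H x y z hx1 hx2 hy1 hy2 h
    rw [key] at h ⊢
    rw [← hmem, ← H x y hx1 hx2 hy1 hy2, hmem]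
    exact h
end

section
/- Let (P,≤,',0,1) be a bounded poset with a unary operation and ⊓ an assigned meet-directoid operation on P (i.e. ⊓ is commutative, x⊓y ∈ L(x,y) for all x,y, and x ≤ y if and only if x⊓y = x). Then the implication (11): 'if z = (z⊓x)⊓(z⊓y) implies z = 0 (for all z), then x = 0 or y = 0' holds for all x,y ∈ P if and only if L(x,y) ≠ {0} for all x,y ∈ P∖{0}. -/
theorem stmt_6 {P : Type*} [PartialOrder P] [BoundedOrder P] (f : P → P)
    (m : P → P → P) (hm : AssignedDirectoid m) :
    (∀ x y : P, (∀ z : P, z = m (m z x) (m z y) → z = ⊥) → x = ⊥ ∨ y = ⊥) ↔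
      (∀ x y : P, x ≠ ⊥ → y ≠ ⊥ → lowerBounds {x, y} ≠ ({⊥} : Set P)) := by
  obtain ⟨hcomm, hlb, hiff⟩ := hm
  have hle1 : ∀ x y : P, m x y ≤ x := fun x y => (hlb x y) (Set.mem_insert x {y})
  have hle2 : ∀ x y : P, m x y ≤ y := fun x y =>
    (hlb x y) (Set.mem_insert_of_mem x rfl)
  constructor
  · intro h x y hx hy hset
    rcases h x y (fun z hz => by
      have h1 : z ≤ x := hz ▸ le_trans (hle1 _ _) (hle2 z x)
      have h2 : z ≤ y := hz ▸ le_trans (hle2 _ _) (hle2 z y)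
      have : z ∈ lowerBounds ({x, y} : Set P) := by
        intro w hw
        rcases hw with rfl | hw
        · exact h1
        · simp only [Set.mem_singleton_iff] at hw; subst hw; exact h2
      rw [hset] at this
      exact this) with h | h
    · exact hx h
    · exact hy h
  · intro h x y h11
    by_contra hc
    push_neg at hc
    obtain ⟨hx, hy⟩ := hc
    have hne := h x y hx hy
    have hbot : (⊥ : P) ∈ lowerBounds ({x, y} : Set P) := fun w _ => bot_le
    have : ∃ w ∈ lowerBounds ({x, y} : Set P), w ≠ ⊥ := by
      by_contra hco
      push_neg at hco
      apply hne
      ext w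
      simp only [Set.mem_singleton_iff]
      exact ⟨fun hw => hco w hw, fun hw => hw ▸ hbot⟩
    obtain ⟨w, hw, hwne⟩ := this
    have hwx : w ≤ x := hw (Set.mem_insert x {y})
    have hwy : w ≤ y := hw (Set.mem_insert_of_mem x rfl)
    have e1 : m w x = w := (hiff w x).mp hwx
    have e2 : m w y = w := (hiff w y).mp hwy
    have e3 : m w w = w := (hiff w w).mp le_rfl
    exact hwne (h11 w (by rw [e1, e2, e3]))
end

section
/- Let (P,≤,',0,1) be a bounded poset with a unary operation ' and ⊓ an assigned meet-directoid operation on P (i.e. ⊓ is commutative, x⊓y ∈ L(x,y) for all x,y, and x ≤ y if and only if x⊓y = x). Then (P,≤,',0,1) is a consistent poset if and only if the following hold for all x,y,z ∈ P: (6) x'' = x; (7) (x⊓y)'⊓y' = y'; (10) x,y ∉ {0,1} and z = (z⊓x)⊓(z⊓x') imply z = (z⊓y)⊓(z⊓y'); (11) if z = (z⊓x)⊓(z⊓y) implies z = 0 for all z, then x = 0 or y = 0. -/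
/-- A consistent poset: a bounded poset with an antitone involution `f` satisfying
(8) `L(x,x') = L(y,y')` for all `x,y ∉ {0,1}` and (9) `L(x,y) ≠ {0}` for `x,y ≠ 0`. -/
def ConsistentPoset {P : Type*} [PartialOrder P] [BoundedOrder P] (f : P → P) : Prop :=
  AntitoneInvolution f ∧
  (∀ x y : P, x ≠ ⊥ → x ≠ ⊤ → y ≠ ⊥ → y ≠ ⊤ →
    lowerBounds {x, f x} = lowerBounds {y, f y}) ∧
  (∀ x y : P, x ≠ ⊥ → y ≠ ⊥ → lowerBounds {x, y} ≠ ({⊥} : Set P))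

theorem stmt_7 {P : Type*} [PartialOrder P] [BoundedOrder P] (f : P → P)
    (m : P → P → P) (hm : AssignedDirectoid m) :
    ConsistentPoset f ↔
      ((∀ x : P, f (f x) = x) ∧
       (∀ x y : P, m (f (m x y)) (f y) = f y) ∧
       (∀ x y z : P, x ≠ ⊥ → x ≠ ⊤ → y ≠ ⊥ → y ≠ ⊤ →
         z = m (m z x) (m z (f x)) → z = m (m z y) (m z (f y))) ∧
       (∀ x y : P, (∀ z : P, z = m (m z x) (m z y) → z = ⊥) → x = ⊥ ∨ y = ⊥)) := by
  obtain ⟨hc, hlb, hle⟩ := hm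
  have la : ∀ a b : P, m a b ≤ a := fun a b => (hlb a b) (by simp)
  have lb : ∀ a b : P, m a b ≤ b := fun a b => (hlb a b) (by simp)
  -- characterization of lower bounds via the directoid
  have char : ∀ x y z : P, (z = m (m z x) (m z y) ↔ z ≤ x ∧ z ≤ y) := by
    intro x y z
    constructor
    · intro h
      constructor
      · calc z = m (m z x) (m z y) := h
          _ ≤ m z x := la _ _
          _ ≤ x := lb _ _
      · calc z = m (m z x) (m z y) := h
          _ ≤ m z y := lb _ _
          _ ≤ y := lb _ _
    · rintro ⟨hx, hy⟩
      rw [(hle z x).1 hx, (hle z y).1 hy, ((hle z z).1 le_rfl)]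
  have memlb : ∀ x y z : P, z ∈ lowerBounds {x, y} ↔ z ≤ x ∧ z ≤ y := by
    intro x y z
    simp [lowerBounds, Set.mem_insert_iff]
  constructor
  · rintro ⟨⟨hinv, hanti⟩, h8, h9⟩
    refine ⟨hinv, ?_, ?_, ?_⟩
    · intro x y
      have : f y ≤ f (m x y) := hanti _ _ (lb x y)
      rw [hc]; exact (hle _ _).1 this
    · intro x y z hx0 hx1 hy0 hy1 hz
      rw [char]
      have := h8 x y hx0 hx1 hy0 hy1
      have hzmem : z ∈ lowerBounds {x, f x} := (memlb _ _ _).2 ((char _ _ _).1 hz)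
      rw [this] at hzmem
      exact (memlb _ _ _).1 hzmem
    · intro x y h
      by_contra hcon
      push_neg at hcon
      apply h9 x y hcon.1 hcon.2
      apply Set.eq_of_subset_of_subset
      · intro z hz
        have := h z ((char _ _ _).2 ((memlb _ _ _).1 hz))
        simp [this]
      · intro z hz
        simp only [Set.mem_singleton_iff] at hz
        subst hz
        exact (memlb _ _ _).2 ⟨bot_le, bot_le⟩
  · rintro ⟨h6, h7, h10, h11⟩
    have hanti : ∀ x y : P, x ≤ y → f y ≤ f x := by
      intro x y hxy
      have h7' := h7 x y
      rw [(hle x y).1 hxy] at h7'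
      rw [hle, hc]; exact h7'
    refine ⟨⟨h6, hanti⟩, ?_, ?_⟩
    · intro x y hx0 hx1 hy0 hy1
      apply Set.eq_of_subset_of_subset
      · intro z hz
        exact (memlb _ _ _).2 ((char _ _ _).1
          (h10 x y z hx0 hx1 hy0 hy1 ((char _ _ _).2 ((memlb _ _ _).1 hz))))
      · intro z hz
        exact (memlb _ _ _).2 ((char _ _ _).1
          (h10 y x z hy0 hy1 hx0 hx1 ((char _ _ _).2 ((memlb _ _ _).1 hz))))
    · intro x y hx0 hy0 hset
      rcases h11 x y (fun z hz => by
        have : z ∈ lowerBounds {x, y} := (memlb _ _ _).2 ((char _ _ _).1 hz)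
        rw [hset] at this
        simpa using this) with h | h
      · exact hx0 h
      · exact hy0 h
end

section
/- Let (P,≤,',0,1) be a finite distributive consistent poset. Define set-valued operators on P by x⊙y := {0} if x ≤ y' and x⊙y := Max L(x,y) otherwise, and x→y := {1} if x ≤ y and x→y := Min U(x',y) otherwise, where Max and Min denote the sets of maximal and minimal elements. Then for all x,y,z ∈ P: (i) x⊙y = y⊙x; (ii) x⊙1 = 1⊙x = {x}; (iii) every element of x⊙y is ≤ z if and only if x ≤ every element of y→z (adjointness). -/
/-- The set of maximal elements of `s`. -/
def maxSet {P : Type*} [PartialOrder P] (s : Set P) : Set P := {x | Maximal (· ∈ s) x}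

/-- The set of minimal elements of `s`. -/
def minSet {P : Type*} [PartialOrder P] (s : Set P) : Set P := {x | Minimal (· ∈ s) x}

open Classical in
/-- The operator `x ⊙ y` of (13). -/
noncomputable def odot {P : Type*} [PartialOrder P] [BoundedOrder P] (f : P → P)
    (x y : P) : Set P :=
  if x ≤ f y then {⊥} else maxSet (lowerBounds {x, y})

open Classical in
/-- The operator `x → y` of (13). -/
noncomputable def arrow {P : Type*} [PartialOrder P] [BoundedOrder P] (f : P → P)
    (x y : P) : Set P :=
  if x ≤ y then {⊤} else minSet (upperBounds {f x, y})

/-!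
Away from the degenerate cases `x ≤ y'` and `y ≤ z`, finiteness reduces `x ⊙ y ≤ z` to
`L(x, y) ⊆ ↓z`, and the involution turns `x ≤ y → z` into `L(y, z') ⊆ ↓x'`. The implication
`L(x, y) ⊆ ↓z ⇒ L(y, z') ⊆ ↓x'` holds because (8) gives `L(x, x') = L(z, z')` (conditions (9) and
the non-degeneracy keep `x` and `z` away from `0` and `1`), after which distributivity applied to
`x, x', w` shows that every `w ∈ L(y, z')` lies below `x'`. The converse is the same implication
for the triple `z', y, x'`.
-/

section

variable {P : Type*} [PartialOrder P]

lemma mem_lowerBounds_pair {a b v : P} : v ∈ lowerBounds {a, b} ↔ v ≤ a ∧ v ≤ b := by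
  simp only [lowerBounds_insert, lowerBounds_singleton, Set.mem_inter_iff, Set.mem_Iic]

lemma mem_upperBounds_pair {a b v : P} : v ∈ upperBounds {a, b} ↔ a ≤ v ∧ b ≤ v := by
  simp only [upperBounds_insert, upperBounds_singleton, Set.mem_inter_iff, Set.mem_Ici]

lemma maxSet_subset_Iic_iff [Finite P] {s : Set P} {z : P} :
    maxSet s ⊆ Set.Iic z ↔ s ⊆ Set.Iic z :=
  ⟨fun h _ hw ↦
    let ⟨_, hwb, hb⟩ := Finite.exists_le_maximal hw
    hwb.trans (h hb),
   fun h _ hw ↦ h hw.prop⟩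

lemma minSet_subset_Ici_iff [Finite P] {s : Set P} {z : P} :
    minSet s ⊆ Set.Ici z ↔ s ⊆ Set.Ici z :=
  ⟨fun h _ hw ↦
    let ⟨_, hbw, hb⟩ := Finite.exists_le_minimal hw
    (h hb).trans hbw,
   fun h _ hw ↦ h hw.prop⟩

namespace AntitoneInvolution

variable {f : P → P}

lemma apply_le_apply_iff (hf : AntitoneInvolution f) {a b : P} : f a ≤ f b ↔ b ≤ a :=
  ⟨fun h ↦ by simpa only [hf.1] using hf.2 _ _ h, hf.2 b a⟩

lemma le_apply_comm (hf : AntitoneInvolution f) {a b : P} : a ≤ f b ↔ b ≤ f a := by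
  rw [← hf.apply_le_apply_iff, hf.1]

lemma apply_le_comm (hf : AntitoneInvolution f) {a b : P} : f a ≤ b ↔ f b ≤ a := by
  rw [← hf.apply_le_apply_iff, hf.1]

lemma map_top [OrderTop P] [OrderBot P] (hf : AntitoneInvolution f) : f ⊤ = ⊥ :=
  le_bot_iff.1 (hf.apply_le_comm.2 le_top)

lemma upperBounds_subset_Ici_iff (hf : AntitoneInvolution f) {x y z : P} :
    upperBounds {f y, z} ⊆ Set.Ici x ↔ lowerBounds {y, f z} ⊆ Set.Iic (f x) := by
  constructor
  · intro h v hv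
    obtain ⟨hvy, hvz⟩ := mem_lowerBounds_pair.1 hv
    exact hf.le_apply_comm.1 (h (mem_upperBounds_pair.2 ⟨hf.2 _ _ hvy, hf.le_apply_comm.1 hvz⟩))
  · intro h w hw
    obtain ⟨hyw, hzw⟩ := mem_upperBounds_pair.1 hw
    exact hf.apply_le_apply_iff.1 (h (mem_lowerBounds_pair.2 ⟨hf.apply_le_comm.1 hyw, hf.2 _ _ hzw⟩))

/-- The distributive law is used for the triple `x, f x, w`: here `w` lies below every upper bound
of `{x, f x}`, and `f x` bounds both `L(x, w)` and `L(f x, w)` from above. -/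
lemma le_apply_of_lowerBounds_pair_eq (hf : AntitoneInvolution f) (hdist : DistributivePoset P)
    {x z w : P} (hxz : lowerBounds {x, f x} = lowerBounds {z, f z}) (hwz : w ≤ f z)
    (hxw : lowerBounds {x, w} ⊆ Set.Iic z) : w ≤ f x := by
  have hxw' : lowerBounds {x, w} ⊆ Set.Iic (f x) := fun v hv ↦ by
    have : v ∈ lowerBounds {z, f z} :=
      mem_lowerBounds_pair.2 ⟨hxw hv, (mem_lowerBounds_pair.1 hv).2.trans hwz⟩
    rw [← hxz] at this
    exact (mem_lowerBounds_pair.1 this).2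
  have hw : w ∈ lowerBounds (upperBounds {x, f x} ∪ {w}) := by
    rintro u (hu | rfl)
    · obtain ⟨hxu, hxu'⟩ := mem_upperBounds_pair.1 hu
      have : f u ∈ lowerBounds {z, f z} := by
        rw [← hxz]
        exact mem_lowerBounds_pair.2 ⟨hf.apply_le_comm.2 hxu', hf.2 _ _ hxu⟩
      exact hwz.trans (hf.apply_le_comm.1 (mem_lowerBounds_pair.1 this).1)
    · exact le_rfl
  rw [hdist x (f x) w] at hw
  refine hw ?_
  rintro v (hv | hv)
  · exact hxw' hv
  · exact (mem_lowerBounds_pair.1 hv).1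

end AntitoneInvolution

namespace ConsistentPoset

variable [BoundedOrder P] {f : P → P}

lemma lowerBounds_pair_apply_eq (hcons : ConsistentPoset f) {x y z : P} (hxy : ¬x ≤ f y)
    (hyz : ¬y ≤ z) (h : lowerBounds {x, y} ⊆ Set.Iic z) :
    lowerBounds {x, f x} = lowerBounds {z, f z} := by
  obtain ⟨-, hcompl, hmeet⟩ := hcons
  have hx : x ≠ ⊥ := by rintro rfl; exact hxy bot_le
  have hy : y ≠ ⊥ := by rintro rfl; exact hyz bot_le
  refine hcompl x z hx ?_ ?_ ?_
  · rintro rfl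
    exact hyz (h (mem_lowerBounds_pair.2 ⟨le_top, le_rfl⟩))
  · rintro rfl
    exact hmeet x y hx hy (Set.eq_singleton_iff_unique_mem.2
      ⟨mem_lowerBounds_pair.2 ⟨bot_le, bot_le⟩, fun _ hv ↦ le_bot_iff.1 (h hv)⟩)
  · rintro rfl
    exact hyz le_top

lemma lowerBounds_subset_Iic_apply (hcons : ConsistentPoset f) (hdist : DistributivePoset P)
    {x y z : P} (hxy : ¬x ≤ f y) (hyz : ¬y ≤ z) (h : lowerBounds {x, y} ⊆ Set.Iic z) :
    lowerBounds {y, f z} ⊆ Set.Iic (f x) := by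
  intro w hw
  obtain ⟨hwy, hwz⟩ := mem_lowerBounds_pair.1 hw
  refine hcons.1.le_apply_of_lowerBounds_pair_eq hdist (hcons.lowerBounds_pair_apply_eq hxy hyz h)
    hwz fun v hv ↦ h ?_
  obtain ⟨hvx, hvw⟩ := mem_lowerBounds_pair.1 hv
  exact mem_lowerBounds_pair.2 ⟨hvx, hvw.trans hwy⟩

lemma lowerBounds_subset_Iic_iff (hcons : ConsistentPoset f) (hdist : DistributivePoset P)
    {x y z : P} (hxy : ¬x ≤ f y) (hyz : ¬y ≤ z) :
    lowerBounds {x, y} ⊆ Set.Iic z ↔ lowerBounds {y, f z} ⊆ Set.Iic (f x) := by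
  have hf := hcons.1
  refine ⟨hcons.lowerBounds_subset_Iic_apply hdist hxy hyz, fun h ↦ ?_⟩
  have hzy : ¬f z ≤ f y := by rwa [hf.apply_le_apply_iff]
  have hyx : ¬y ≤ f x := by rwa [← hf.le_apply_comm]
  rw [Set.pair_comm] at h
  simpa only [hf.1, Set.pair_comm y x] using hcons.lowerBounds_subset_Iic_apply hdist hzy hyx h

end ConsistentPoset

variable [BoundedOrder P] {f : P → P}

lemma odot_comm (hf : AntitoneInvolution f) (x y : P) : odot f x y = odot f y x := by
  rw [odot, odot, hf.le_apply_comm, Set.pair_comm]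

lemma odot_top (hf : AntitoneInvolution f) (x : P) : odot f x ⊤ = {x} := by
  rw [odot, hf.map_top]
  split_ifs with hx
  · rw [le_bot_iff.1 hx]
  · ext v
    exact maximal_iff_eq (mem_lowerBounds_pair.2 ⟨le_rfl, le_top⟩)
      fun _ hw ↦ (mem_lowerBounds_pair.1 hw).1

lemma odot_subset_Iic_iff_arrow_subset_Ici [Finite P] (hcons : ConsistentPoset f)
    (hdist : DistributivePoset P) (x y z : P) :
    odot f x y ⊆ Set.Iic z ↔ arrow f y z ⊆ Set.Ici x := by
  by_cases hxy : x ≤ f y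
  · suffices arrow f y z ⊆ Set.Ici x by simpa [odot, hxy]
    rw [arrow]
    split_ifs
    · simp
    · exact fun _ hw ↦ hxy.trans (mem_upperBounds_pair.1 hw.prop).1
  by_cases hyz : y ≤ z
  · suffices odot f x y ⊆ Set.Iic z by simpa [arrow, hyz]
    rw [odot, if_neg hxy]
    exact fun _ hw ↦ (mem_lowerBounds_pair.1 hw.prop).2.trans hyz
  rw [odot, arrow, if_neg hxy, if_neg hyz, maxSet_subset_Iic_iff, minSet_subset_Ici_iff,
    hcons.1.upperBounds_subset_Ici_iff]
  exact hcons.lowerBounds_subset_Iic_iff hdist hxy hyz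

end

theorem stmt_9 {P : Type*} [PartialOrder P] [BoundedOrder P] [Finite P] (f : P → P)
    (hcons : ConsistentPoset f) (hdist : DistributivePoset P) :
    ∀ x y z : P,
      odot f x y = odot f y x ∧
      odot f x ⊤ = {x} ∧ odot f ⊤ x = {x} ∧
      ((∀ w ∈ odot f x y, w ≤ z) ↔ (∀ w ∈ arrow f y z, x ≤ w)) := by
  intro x y z
  have hf := hcons.1
  exact ⟨odot_comm hf x y, odot_top hf x, (odot_comm hf ⊤ x).trans (odot_top hf x),
    odot_subset_Iic_iff_arrow_subset_Ici hcons hdist x y z⟩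
end

section
/- Let (P,≤,',0,1) be a distributive consistent poset and a,b,c ∈ P with a,b ∉ {0,1}. If L(a,b) ⊆ L(c) (i.e. every common lower bound of a and b is ≤ c), then U(b',c) ⊆ U(a) (i.e. every common upper bound of b' and c is ≥ a). -/
theorem stmt_10 {P : Type*} [PartialOrder P] [BoundedOrder P] (f : P → P)
    (hcons : ConsistentPoset f) (hdist : DistributivePoset P)
    (a b c : P) (ha0 : a ≠ ⊥) (ha1 : a ≠ ⊤) (hb0 : b ≠ ⊥) (hb1 : b ≠ ⊤)
    (h : lowerBounds {a, b} ⊆ lowerBounds {c}) :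
    upperBounds {f b, c} ⊆ upperBounds {a} := by
  obtain ⟨⟨hinv, hanti⟩, h8, _⟩ := hcons
  -- Step 0: a is a lower bound of upperBounds {b, f b}
  have key : a ∈ lowerBounds (upperBounds {b, f b}) := by
    intro u hu
    have hbu : b ≤ u := hu (Set.mem_insert _ _)
    have hfbu : f b ≤ u := hu (Set.mem_insert_of_mem _ rfl)
    have hfumem : f u ∈ lowerBounds {b, f b} := by
      intro x hx
      rcases hx with rfl | hx
      · have := hanti _ _ hfbu; rwa [hinv] at this
      · rcases hx with rfl
        exact hanti _ _ hbu
    rw [h8 b a hb0 hb1 ha0 ha1] at hfumem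
    have hfa : f u ≤ f a := hfumem (Set.mem_insert_of_mem _ rfl)
    have := hanti _ _ hfa
    rwa [hinv, hinv] at this
  -- Step 1: a ∈ L(U(L(b,a) ∪ L(fb,a)))
  have h1 : a ∈ lowerBounds (upperBounds (lowerBounds {b, a} ∪ lowerBounds {f b, a})) := by
    rw [← hdist b (f b) a]
    intro u hu
    rcases hu with hu | hu
    · exact key hu
    · rw [Set.mem_singleton_iff] at hu; rw [hu]
  -- Step 2: L(b,a) ⊆ L(c,a)
  have h2 : lowerBounds {b, a} ⊆ lowerBounds {c, a} := by
    intro x hx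
    have hxa : x ≤ a := hx (Set.mem_insert_of_mem _ rfl)
    have hxb : x ≤ b := hx (Set.mem_insert _ _)
    have hxab : x ∈ lowerBounds {a, b} := by
      intro y hy; rcases hy with rfl | hy
      · exact hxa
      · rcases hy with rfl; exact hxb
    have hxc : x ≤ c := h hxab rfl
    intro y hy
    rcases hy with rfl | hy
    · exact hxc
    · rcases hy with rfl; exact hxa
  -- Step 3: transfer along monotonicity, then distributivity with x = fb, y = c, z = a
  have h3 : a ∈ lowerBounds (upperBounds (lowerBounds {f b, a} ∪ lowerBounds {c, a})) := by
    intro u hu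
    apply h1
    intro x hx
    apply hu
    rcases hx with hx | hx
    · exact Or.inr (h2 hx)
    · exact Or.inl hx
  rw [← hdist (f b) c a] at h3
  intro u hu x hx
  rw [Set.mem_singleton_iff] at hx
  rw [hx]
  exact h3 (Or.inl hu)
end

section
/- Let (P,≤,',0,1) be a distributive consistent poset and a,b,c ∈ P with b,c ∉ {0,1}. If a is a lower bound of U(b',c) (i.e. a ≤ u for every u ∈ U(b',c)), then L(a,b) ⊆ L(c). -/
theorem stmt_11 {P : Type*} [PartialOrder P] [BoundedOrder P] (f : P → P)
    (hcons : ConsistentPoset f) (hdist : DistributivePoset P)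
    (a b c : P) (hb0 : b ≠ ⊥) (hb1 : b ≠ ⊤) (hc0 : c ≠ ⊥) (hc1 : c ≠ ⊤)
    (h : a ∈ lowerBounds (upperBounds {f b, c})) :
    lowerBounds {a, b} ⊆ lowerBounds {c} := by
  intro d hd
  have hda : d ≤ a := hd (Set.mem_insert _ _)
  have hdb : d ≤ b := hd (Set.mem_insert_of_mem _ rfl)
  have h1 : d ∈ lowerBounds (upperBounds {f b, c} ∪ {b}) := by
    rintro u (hu | hu)
    · exact le_trans hda (h hu)
    · simp only [Set.mem_singleton_iff] at hu
      subst hu; exact hdb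
  rw [hdist (f b) c b] at h1
  have hpair : lowerBounds {f b, b} = lowerBounds {c, f c} := by
    rw [Set.pair_comm]; exact hcons.2.1 b c hb0 hb1 hc0 hc1
  rw [hpair] at h1
  have hc : c ∈ upperBounds (lowerBounds {c, f c} ∪ lowerBounds {c, b}) := by
    rintro u (hu | hu)
    · exact hu (Set.mem_insert _ _)
    · exact hu (Set.mem_insert _ _)
  intro x hx
  simp only [Set.mem_singleton_iff] at hx
  subst hx
  exact h1 hc
end

section
/- Let (P,≤,',0,1) be a strongly modular consistent poset and a,b ∈ P with a,b ∉ {0,1}. Then U(b', L(b, U(a,b'))) ⊆ U(a), i.e. every upper bound of {b'} ∪ L(b, U(a,b')) is ≥ a. -/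
/-- A poset is strongly modular if it satisfies the identities
(2) `L(U(x,y),U(x,z)) = L(U(x, L(y,U(x,z))))` and
(3) `L(U(L(x,z),y),z) = L(U(L(x,z), L(y,z)))`. -/
def StronglyModularPoset (P : Type*) [PartialOrder P] : Prop :=
  (∀ x y z : P,
    lowerBounds (upperBounds {x, y} ∪ upperBounds {x, z}) =
      lowerBounds (upperBounds ({x} ∪ lowerBounds ({y} ∪ upperBounds {x, z})))) ∧
  (∀ x y z : P,
    lowerBounds (upperBounds (lowerBounds {x, z} ∪ {y}) ∪ {z}) =
      lowerBounds (upperBounds (lowerBounds {x, z} ∪ lowerBounds {y, z})))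

theorem stmt_13 {P : Type*} [PartialOrder P] [BoundedOrder P] (f : P → P)
    (hcons : ConsistentPoset f) (hsmod : StronglyModularPoset P)
    (a b : P) (ha0 : a ≠ ⊥) (ha1 : a ≠ ⊤) (hb0 : b ≠ ⊥) (hb1 : b ≠ ⊤) :
    upperBounds ({f b} ∪ lowerBounds ({b} ∪ upperBounds {a, f b})) ⊆ upperBounds {a} := by

  obtain ⟨⟨hinv, hanti⟩, h8, _⟩ := hcons
  obtain ⟨h2, _⟩ := hsmod
  have hfbot : f ⊥ = ⊤ := le_antisymm le_top (by
    calc (⊤ : P) = f (f ⊤) := (hinv ⊤).symm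
      _ ≤ f ⊥ := hanti _ _ bot_le)
  have hftop : f ⊤ = ⊥ := by rw [← hfbot, hinv]
  have hfa0 : f a ≠ ⊥ := fun h => ha1 (by rw [← hinv a, h, hfbot])
  have hfa1 : f a ≠ ⊤ := fun h => ha0 (by rw [← hinv a, h, hftop])
  have key : ∀ u ∈ upperBounds {f b, b}, a ≤ u := by
    intro u hu
    have hub : b ≤ u := hu (by simp)
    have hufb : f b ≤ u := hu (by simp)
    have hfu : f u ∈ lowerBounds {b, f b} := by
      intro z hz
      rcases hz with hz | hz
      · rw [hz]
        calc f u ≤ f (f b) := hanti _ _ hufb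
          _ = b := hinv b
      · simp only [Set.mem_singleton_iff] at hz
        rw [hz]
        exact hanti _ _ hub
    rw [h8 b (f a) hb0 hb1 hfa0 hfa1] at hfu
    have hfua : f u ≤ f a := hfu (by simp)
    calc a = f (f a) := (hinv a).symm
      _ ≤ f (f u) := hanti _ _ hfua
      _ = u := hinv u
  have ha_mem : a ∈ lowerBounds (upperBounds {f b, b} ∪ upperBounds {f b, a}) := by
    intro u hu
    rcases hu with hu | hu
    · exact key u hu
    · exact hu (by simp)
  rw [h2 (f b) b a] at ha_mem
  intro c hc
  rw [Set.pair_comm a (f b)] at hc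
  rw [upperBounds_singleton, Set.mem_Ici]
  exact ha_mem hc
end

section
/- Let (P,≤,',0,1) be a strongly modular consistent poset and b,c ∈ P with b,c ∉ {0,1}. Then L(U(L(b,c),b'),b) ⊆ L(c), i.e. every element that is ≤ b and ≤ every upper bound of L(b,c) ∪ {b'} is ≤ c. -/
theorem stmt_14 {P : Type*} [PartialOrder P] [BoundedOrder P] (f : P → P)
    (hcons : ConsistentPoset f) (hsmod : StronglyModularPoset P)
    (b c : P) (hb0 : b ≠ ⊥) (hb1 : b ≠ ⊤) (hc0 : c ≠ ⊥) (hc1 : c ≠ ⊤) :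
    lowerBounds (upperBounds (lowerBounds {b, c} ∪ {f b}) ∪ {b}) ⊆ lowerBounds {c} := by
  obtain ⟨⟨hinv, hant⟩, h8, h9⟩ := hcons
  obtain ⟨h2, h3⟩ := hsmod
  rw [Set.pair_comm b c, h3 c (f b) b]
  intro t ht u hu
  rw [Set.mem_singleton_iff] at hu; rw [hu]
  apply ht
  intro s hs
  rcases hs with hs | hs
  · exact hs (Set.mem_insert _ _)
  · have hs' : s ∈ lowerBounds {c, f c} := by
      rw [← h8 b c hb0 hb1 hc0 hc1]
      rwa [Set.pair_comm] at hs
    exact hs' (Set.mem_insert _ _)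
end

section
/- Every strongly modular poset is modular, i.e. if a poset (P,≤) satisfies the identities (2) L(U(x,y),U(x,z)) = L(U(x ∪ L(y,U(x,z)))) and (3) L(U(L(x,z),y),z) = L(U(L(x,z) ∪ L(y,z))) for all x,y,z ∈ P, then for all x,y,z ∈ P with x ≤ z it holds that L(U(x,y),z) = L(U(x ∪ L(y,z))). -/
/-! For `x ≤ z` we have `L(x,z) = ↓x`, and `↓x` has the same upper bounds as `x`,
so identity (3) collapses to the modular law. -/

theorem lowerBounds_pair_of_le {P : Type*} [Preorder P] {x z : P} (hxz : x ≤ z) :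
    lowerBounds {x, z} = Set.Iic x := by
  rw [lowerBounds_insert, lowerBounds_singleton, Set.inter_eq_left.mpr (Set.Iic_subset_Iic.mpr hxz)]

theorem upperBounds_Iic_union {P : Type*} [Preorder P] (x : P) (s : Set P) :
    upperBounds (Set.Iic x ∪ s) = upperBounds ({x} ∪ s) := by
  rw [upperBounds_union, upperBounds_union, upperBounds_Iic, upperBounds_singleton]

theorem stmt_15 {P : Type*} [PartialOrder P] (hsmod : StronglyModularPoset P) :
    ∀ x y z : P, x ≤ z →
      lowerBounds (upperBounds {x, y} ∪ {z}) =
        lowerBounds (upperBounds ({x} ∪ lowerBounds {y, z})) := by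
  intro x y z hxz
  have h3 := hsmod.2 x y z
  rwa [lowerBounds_pair_of_le hxz, upperBounds_Iic_union, upperBounds_Iic_union,
    Set.singleton_union] at h3
end

section
/- Let (P,≤,') be a poset with an antitone involution and let DM(P) := {L(A) : A ⊆ P}, ordered by set inclusion, with the map A* := L(A') where A' := {x' : x ∈ A}. Then * is an antitone involution on (DM(P),⊆): for all A,B ∈ DM(P), A ⊆ B implies B* ⊆ A*, and A** = A. -/
theorem stmt_17 {P : Type*} [PartialOrder P] (f : P → P) (hf : AntitoneInvolution f)
    (A B : Set P) (hA : ∃ S : Set P, A = lowerBounds S) (hB : ∃ S : Set P, B = lowerBounds S) :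
    (A ⊆ B → lowerBounds (f '' B) ⊆ lowerBounds (f '' A)) ∧
      lowerBounds (f '' lowerBounds (f '' A)) = A := by
  obtain ⟨hinv, hanti⟩ := hf
  have key : ∀ X : Set P, f '' lowerBounds X = upperBounds (f '' X) := by
    intro X
    ext y
    constructor
    · rintro ⟨x, hx, rfl⟩ z ⟨w, hw, rfl⟩
      exact hanti _ _ (hx hw)
    · intro hy
      refine ⟨f y, ?_, hinv y⟩
      intro z hz
      have := hy ⟨z, hz, rfl⟩
      have := hanti _ _ this
      rwa [hinv] at this
  have ff : ∀ X : Set P, f '' (f '' X) = X := by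
    intro X
    ext x
    constructor
    · rintro ⟨y, ⟨z, hz, rfl⟩, rfl⟩; rwa [hinv]
    · intro hx; exact ⟨f x, ⟨x, hx, rfl⟩, hinv x⟩
  constructor
  · rintro hAB x hx z ⟨w, hw, rfl⟩
    exact hx ⟨w, hAB hw, rfl⟩
  · obtain ⟨S, rfl⟩ := hA
    rw [key, ff]
    apply Set.Subset.antisymm
    · intro x hx s hs
      exact hx (fun z hz => hz hs)
    · intro x hx z hz
      exact hz hx
end

section
/- Let (P,≤,',0,1) be a consistent poset, A ⊆ P with L(A) ≠ {0} and 1 ∉ L(A), and let a ∈ L(A) with a ≠ 0. Then L(A) ∩ L(U(A')) = L(a,a'), where A' := {x' : x ∈ A}. -/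
theorem stmt_18 {P : Type*} [PartialOrder P] [BoundedOrder P] (f : P → P)
    (hcons : ConsistentPoset f) (A : Set P)
    (hA0 : lowerBounds A ≠ ({⊥} : Set P)) (hA1 : (⊤ : P) ∉ lowerBounds A)
    (a : P) (ha : a ∈ lowerBounds A) (ha0 : a ≠ ⊥) :
    lowerBounds A ∩ lowerBounds (upperBounds (f '' A)) = lowerBounds {a, f a} := by
  obtain ⟨⟨hinv, hanti⟩, h8, _h9⟩ := hcons
  have fbot : f ⊥ = ⊤ := by
    have h1 : f (f ⊤) ≤ f ⊥ := hanti _ _ bot_le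
    rw [hinv] at h1
    exact le_antisymm le_top h1
  have hat : a ≠ ⊤ := fun h => hA1 (h ▸ ha)
  ext z
  simp only [Set.mem_inter_iff]
  constructor
  · rintro ⟨hzA, hzU⟩
    by_cases hz : z = ⊥
    · subst hz; intro w _; exact bot_le
    · have hzt : z ≠ ⊤ := fun h => hA1 (h ▸ hzA)
      have hzz : z ∈ lowerBounds {z, f z} := by
        intro w hw
        rcases hw with rfl | hw
        · exact le_rfl
        · rw [Set.mem_singleton_iff] at hw
          subst hw
          apply hzU
          rintro _ ⟨x, hx, rfl⟩
          exact hanti _ _ (hzA hx)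
      rwa [h8 z a hz hzt ha0 hat] at hzz
  · intro hz
    have hza : z ≤ a := hz (Set.mem_insert _ _)
    refine ⟨fun x hx => hza.trans (ha hx), ?_⟩
    intro u hu
    have hu' : f u ∈ lowerBounds A := by
      intro x hx
      have h1 : f u ≤ f (f x) := hanti _ _ (hu ⟨x, hx, rfl⟩)
      rwa [hinv] at h1
    by_cases h : f u = ⊥
    · have : u = ⊤ := by rw [← hinv u, h, fbot]
      rw [this]; exact le_top
    · have hut : f u ≠ ⊤ := fun ht => hA1 (ht ▸ hu')
      have heq := h8 a (f u) ha0 hat h hut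
      rw [heq] at hz
      have := hz (Set.mem_insert_of_mem _ rfl)
      rwa [hinv] at this
end

section
/- Let (P,≤,',0,1) be a bounded poset with an antitone involution and let DM(P) := {L(A) : A ⊆ P} be ordered by set inclusion, with involution A* := L(A'), meet A ∧ B = A ∩ B, join A ∨ B = L(U(A ∪ B)), least element {0} and greatest element P. Then (DM(P),⊆,*) is a consistent lattice (i.e. A ∧ A* = B ∧ B* for all A,B ∈ DM(P)∖{{0},P}, and A ∧ B ≠ {0} for all A,B ∈ DM(P)∖{{0}}) if and only if (P,≤,',0,1) is a consistent poset. -/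
/-- The carrier of the Dedekind-MacNeille completion of `P`:
all sets of the form `L(A)` for `A ⊆ P`. -/
def DM (P : Type*) [PartialOrder P] : Set (Set P) :=
  {S | ∃ A : Set P, S = lowerBounds A}

private lemma exists_ne_bot' {P : Type*} [PartialOrder P] [BoundedOrder P]
    {T : Set P} (hb : ⊥ ∈ T) (h : T ≠ ({⊥} : Set P)) : ∃ c ∈ T, c ≠ ⊥ := by
  by_contra h'
  push_neg at h'
  apply h
  ext z
  simp only [Set.mem_singleton_iff]
  exact ⟨fun hz => h' z hz, fun hz => hz ▸ hb⟩

private lemma f_bot {P : Type*} [PartialOrder P] [BoundedOrder P] {f : P → P}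
    (hf : AntitoneInvolution f) : f ⊥ = ⊤ := by
  have : (⊤ : P) ≤ f ⊥ := by
    have := hf.2 ⊥ (f ⊤) bot_le
    rwa [hf.1 ⊤] at this
  exact le_antisymm le_top this

theorem stmt_19 {P : Type*} [PartialOrder P] [BoundedOrder P] (f : P → P)
    (hf : AntitoneInvolution f) :
    ((∀ A B : Set P, A ∈ DM P → B ∈ DM P →
        A ≠ ({⊥} : Set P) → A ≠ Set.univ → B ≠ ({⊥} : Set P) → B ≠ Set.univ →
        A ∩ lowerBounds (f '' A) = B ∩ lowerBounds (f '' B)) ∧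
     (∀ A B : Set P, A ∈ DM P → B ∈ DM P →
        A ≠ ({⊥} : Set P) → B ≠ ({⊥} : Set P) → A ∩ B ≠ ({⊥} : Set P))) ↔
      ConsistentPoset f := by
  -- basic facts
  have hIicDM : ∀ x : P, Set.Iic x ∈ DM P := fun x =>
    ⟨{x}, by rw [lowerBounds_singleton]⟩
  have hIic_ne_bot : ∀ x : P, x ≠ ⊥ → Set.Iic x ≠ ({⊥} : Set P) := by
    intro x hx h
    exact hx (by have := h ▸ Set.mem_Iic.mpr (le_refl x); simpa using this)
  have hIic_ne_univ : ∀ x : P, x ≠ ⊤ → Set.Iic x ≠ Set.univ := by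
    intro x hx h
    exact hx (top_le_iff.mp (by have : (⊤ : P) ∈ Set.Iic x := h ▸ Set.mem_univ _; simpa using this))
  have hlbfIic : ∀ x : P, lowerBounds (f '' Set.Iic x) = Set.Iic (f x) := by
    intro x
    apply le_antisymm
    · intro c hc
      exact hc ⟨x, Set.mem_Iic.mpr le_rfl, rfl⟩
    · rintro c hc _ ⟨z, hz, rfl⟩
      exact le_trans hc (hf.2 z x hz)
  have hpair : ∀ x y : P, lowerBounds ({x, y} : Set P) = Set.Iic x ∩ Set.Iic y := by
    intro x y
    rw [show ({x, y} : Set P) = insert x {y} from rfl, lowerBounds_insert, lowerBounds_singleton]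
  constructor
  · rintro ⟨h8, h9⟩
    refine ⟨hf, ?_, ?_⟩
    · intro x y hx0 hx1 hy0 hy1
      have hx := h8 (Set.Iic x) (Set.Iic y) (hIicDM x) (hIicDM y)
        (hIic_ne_bot x hx0) (hIic_ne_univ x hx1) (hIic_ne_bot y hy0) (hIic_ne_univ y hy1)
      rw [hlbfIic x, hlbfIic y] at hx
      rw [hpair, hpair]
      exact hx
    · intro x y hx hy h
      apply h9 (Set.Iic x) (Set.Iic y) (hIicDM x) (hIicDM y)
        (hIic_ne_bot x hx) (hIic_ne_bot y hy)
      rw [← hpair]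
      exact h
  · rintro ⟨-, h8, h9⟩
    -- lower bounds sets are downward closed and contain ⊥
    have hdc : ∀ (S : Set P) {c a : P}, c ≤ a → a ∈ lowerBounds S → c ∈ lowerBounds S :=
      fun S c a hca ha s hs => le_trans hca (ha hs)
    have hbotmem : ∀ S : Set P, (⊥ : P) ∈ lowerBounds S := fun S s _ => bot_le
    have htopnot : ∀ S : Set P, lowerBounds S ≠ Set.univ → (⊤ : P) ∉ lowerBounds S := by
      intro S hS htop
      apply hS
      ext z
      simp only [Set.mem_univ, iff_true]
      exact fun s hs => le_trans le_top (htop hs)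
    -- key lemma
    have key : ∀ (S : Set P) (a : P), a ∈ lowerBounds S → a ≠ ⊥ → a ≠ ⊤ →
        (⊤ : P) ∉ lowerBounds S →
        lowerBounds S ∩ lowerBounds (f '' lowerBounds S) = lowerBounds {a, f a} := by
      intro S a haS ha0 ha1 htop
      ext c
      constructor
      · rintro ⟨hcS, hcf⟩
        by_cases hc0 : c = ⊥
        · subst hc0
          exact hbotmem _
        · have hc1 : c ≠ ⊤ := fun h => htop (h ▸ hcS)
          rw [h8 a c ha0 ha1 hc0 hc1, hpair]
          exact ⟨Set.mem_Iic.mpr le_rfl, Set.mem_Iic.mpr (hcf ⟨c, hcS, rfl⟩)⟩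
      · intro hc
        rw [hpair] at hc
        refine ⟨hdc S hc.1 haS, ?_⟩
        rintro _ ⟨b, hbS, rfl⟩
        by_cases hb0 : b = ⊥
        · rw [hb0, f_bot hf]; exact le_top
        · have hb1 : b ≠ ⊤ := fun h => htop (h ▸ hbS)
          have := h8 a b ha0 ha1 hb0 hb1
          rw [hpair, hpair] at this
          have hc' : c ∈ Set.Iic b ∩ Set.Iic (f b) := this ▸ hc
          exact hc'.2
    constructor
    · rintro A B ⟨SA, rfl⟩ ⟨SB, rfl⟩ hA0 hA1 hB0 hB1
      obtain ⟨a, haA, ha0⟩ := exists_ne_bot' (hbotmem SA) hA0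
      obtain ⟨b, hbB, hb0⟩ := exists_ne_bot' (hbotmem SB) hB0
      have htA := htopnot SA hA1
      have htB := htopnot SB hB1
      have ha1 : a ≠ ⊤ := fun h => htA (h ▸ haA)
      have hb1 : b ≠ ⊤ := fun h => htB (h ▸ hbB)
      rw [key SA a haA ha0 ha1 htA, key SB b hbB hb0 hb1 htB]
      exact h8 a b ha0 ha1 hb0 hb1
    · rintro A B ⟨SA, rfl⟩ ⟨SB, rfl⟩ hA0 hB0 h
      obtain ⟨a, haA, ha0⟩ := exists_ne_bot' (hbotmem SA) hA0
      obtain ⟨b, hbB, hb0⟩ := exists_ne_bot' (hbotmem SB) hB0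
      obtain ⟨c, hc, hc0⟩ := exists_ne_bot' (hbotmem {a, b}) (h9 a b ha0 hb0)
      rw [hpair] at hc
      have : c ∈ lowerBounds SA ∩ lowerBounds SB :=
        ⟨hdc SA hc.1 haA, hdc SB hc.2 hbB⟩
      rw [h] at this
      exact hc0 this
end
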